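/- Let Γ be a connected finite simplicial graph that is not a join, let S₁ be a subset of the vertex set of Γ, and let H be a conjugate of the special subgroup of G_Γ generated by S₁. Then the following are equivalent: (1) S₁ contains at least two non-adjacent vertices and the distance in Γ between any two distinct elements of S₁ is different from 2; (2) H is join-free; (3) H is star-free. Moreover, a subgroup H satisfying these conditions is virtually free. -/

import Mathlib

open scoped Pointwise ENNReal

namespace RACGPaper

/-- The defining relations of the right-angled Coxeter group of a simple graph. -/
def racgRels {V : Type*} (Γ : SimpleGraph V) : Set (FreeGroup V) :=
  {r | (∃ v : V, r = FreeGroup.of v * FreeGroup.of v) ∨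
       (∃ v w : V, Γ.Adj v w ∧ r = (FreeGroup.of v * FreeGroup.of w) ^ 2)}

/-- The right-angled Coxeter group of a simple graph. -/
def RACG {V : Type*} (Γ : SimpleGraph V) : Type _ := PresentedGroup (racgRels Γ)

instance {V : Type*} (Γ : SimpleGraph V) : Group (RACG Γ) :=
  inferInstanceAs (Group (PresentedGroup (racgRels Γ)))

/-- The generator of `RACG Γ` corresponding to a vertex. -/
def gen {V : Type*} (Γ : SimpleGraph V) (v : V) : RACG Γ := PresentedGroup.of v

/-- Word length with respect to the vertex generators (which are involutions). -/
noncomputable def len {V : Type*} (Γ : SimpleGraph V) (g : RACG Γ) : ℕ :=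
  sInf {n | ∃ l : List V, l.length = n ∧ (l.map (gen Γ)).prod = g}

/-- The word metric on `RACG Γ`. -/
noncomputable def wdist {V : Type*} (Γ : SimpleGraph V) (g h : RACG Γ) : ℕ :=
  len Γ (g⁻¹ * h)

/-- Distance from a point to a subgroup. -/
noncomputable def distH {V : Type*} (Γ : SimpleGraph V) (H : Subgroup (RACG Γ))
    (x : RACG Γ) : ℕ :=
  sInf {n | ∃ h ∈ H, wdist Γ x h = n}

/-- A `(K, C)`-quasi-geodesic defined on the integer interval `[a, b]`. -/
def IsQuasiGeodesic {V : Type*} (Γ : SimpleGraph V) (K C : ℝ) (a b : ℤ)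
    (γ : ℤ → RACG Γ) : Prop :=
  ∀ i ∈ Set.Icc a b, ∀ j ∈ Set.Icc a b,
    |(i : ℝ) - (j : ℝ)| / K - C ≤ (wdist Γ (γ i) (γ j) : ℝ) ∧
    (wdist Γ (γ i) (γ j) : ℝ) ≤ K * |(i : ℝ) - (j : ℝ)| + C

/-- A subgroup is strongly quasiconvex if every quasi-geodesic with endpoints on it
stays uniformly close to it. -/
def StronglyQuasiconvex {V : Type*} (Γ : SimpleGraph V) (H : Subgroup (RACG Γ)) : Prop :=
  ∀ K C : ℝ, 1 ≤ K → 0 ≤ C → ∃ M : ℝ, 0 ≤ M ∧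
    ∀ (a b : ℤ) (γ : ℤ → RACG Γ), IsQuasiGeodesic Γ K C a b γ →
      γ a ∈ H → γ b ∈ H → ∀ i ∈ Set.Icc a b, (distH Γ H (γ i) : ℝ) ≤ M

/-- `H` is malnormal: `gHg⁻¹ ∩ H = {1}` for every `g ∉ H`. -/
def Malnormal {G : Type*} [Group G] (H : Subgroup G) : Prop :=
  ∀ g : G, g ∉ H → ∀ x : G, x ∈ H → g⁻¹ * x * g ∈ H → x = 1

/-- `H` is almost malnormal: `gHg⁻¹ ∩ H` is finite for every `g ∉ H`. -/
def AlmostMalnormal {G : Type*} [Group G] (H : Subgroup G) : Prop :=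
  ∀ g : G, g ∉ H → {x : G | x ∈ H ∧ g⁻¹ * x * g ∈ H}.Finite

/-- An almost malnormal collection of subgroups. -/
def AlmostMalnormalColl {G : Type*} [Group G] (𝓗 : Set (Subgroup G)) : Prop :=
  ∀ H ∈ 𝓗, ∀ H' ∈ 𝓗, ∀ g : G,
    {x : G | x ∈ H ∧ g⁻¹ * x * g ∈ (H' : Subgroup G)}.Infinite → H = H' ∧ g ∈ H

/-- A group is virtually free if it has a free subgroup of finite index. -/
def VirtuallyFree (G : Type*) [Group G] : Prop :=
  ∃ F : Subgroup G, F.FiniteIndex ∧ IsFreeGroup F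

/-- A set of vertices spans a join subgraph. -/
def IsJoin {V : Type*} (Γ : SimpleGraph V) (J : Set V) : Prop :=
  ∃ V₁ V₂ : Set V, V₁.Nonempty ∧ V₂.Nonempty ∧ Disjoint V₁ V₂ ∧ V₁ ∪ V₂ = J ∧
    ∀ v ∈ V₁, ∀ w ∈ V₂, Γ.Adj v w

/-- The special subgroup generated by a set of vertices. -/
def special {V : Type*} (Γ : SimpleGraph V) (S₁ : Set V) : Subgroup (RACG Γ) :=
  Subgroup.closure (gen Γ '' S₁)

/-- The conjugate subgroup `gHg⁻¹`. -/
def conjSubgroup {G : Type*} [Group G] (g : G) (H : Subgroup G) : Subgroup G :=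
  H.map (MulAut.conj g).toMonoidHom

/-- `x` lies in some join subgroup of `RACG Γ`. -/
def InJoinSubgroup {V : Type*} (Γ : SimpleGraph V) (x : RACG Γ) : Prop :=
  ∃ J : Set V, IsJoin Γ J ∧ x ∈ special Γ J

/-- An infinite subgroup is join-free if none of its infinite-order elements is
conjugate into a join subgroup. -/
def JoinFree {V : Type*} (Γ : SimpleGraph V) (H : Subgroup (RACG Γ)) : Prop :=
  (H : Set (RACG Γ)).Infinite ∧
    ∀ h ∈ H, ¬ IsOfFinOrder h → ∀ g : RACG Γ, ¬ InJoinSubgroup Γ (g * h * g⁻¹)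

/-- The star of a vertex: the vertex together with its neighbours. -/
def starSet {V : Type*} (Γ : SimpleGraph V) (v : V) : Set V :=
  {v} ∪ {w | Γ.Adj v w}

/-- `x` lies in some star subgroup of `RACG Γ`. -/
def InStarSubgroup {V : Type*} (Γ : SimpleGraph V) (x : RACG Γ) : Prop :=
  ∃ v : V, x ∈ special Γ (starSet Γ v)

/-- An infinite subgroup is star-free if none of its infinite-order elements is
conjugate into a star subgroup. -/
def StarFree {V : Type*} (Γ : SimpleGraph V) (H : Subgroup (RACG Γ)) : Prop :=
  (H : Set (RACG Γ)).Infinite ∧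
    ∀ h ∈ H, ¬ IsOfFinOrder h → ∀ g : RACG Γ, ¬ InStarSubgroup Γ (g * h * g⁻¹)

/-- Word length with respect to a (symmetrized) set `T` of group elements. -/
noncomputable def wlen {G : Type*} [Group G] (T : Set G) (g : G) : ℕ :=
  sInf {n | ∃ l : List G, (∀ x ∈ l, x ∈ T ∨ x⁻¹ ∈ T) ∧ l.length = n ∧ l.prod = g}

/-- A finitely generated subgroup of `RACG Γ` is undistorted if the inclusion is a
quasi-isometric embedding with respect to word metrics. -/
def Undistorted {V : Type*} (Γ : SimpleGraph V) (H : Subgroup (RACG Γ)) : Prop :=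
  ∃ T : Finset (RACG Γ), (T : Set (RACG Γ)) ⊆ (H : Set (RACG Γ)) ∧
    Subgroup.closure (T : Set (RACG Γ)) = H ∧
    ∃ K C : ℝ, 1 ≤ K ∧ 0 ≤ C ∧ ∀ h ∈ H,
      (wlen (T : Set (RACG Γ)) h : ℝ) / K - C ≤ (len Γ h : ℝ) ∧
      (len Γ h : ℝ) ≤ K * (wlen (T : Set (RACG Γ)) h : ℝ) + C

/-- A subgroup is stable if it is undistorted and quasi-geodesics with common
endpoints on it uniformly fellow-travel. -/
def Stable {V : Type*} (Γ : SimpleGraph V) (H : Subgroup (RACG Γ)) : Prop :=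
  Undistorted Γ H ∧ ∀ K C : ℝ, 1 ≤ K → 0 ≤ C → ∃ M : ℝ, 0 ≤ M ∧
    ∀ (a b a' b' : ℤ) (γ γ' : ℤ → RACG Γ),
      IsQuasiGeodesic Γ K C a b γ → IsQuasiGeodesic Γ K C a' b' γ' →
      γ a = γ' a' → γ b = γ' b' → γ a ∈ H → γ b ∈ H →
      (∀ i ∈ Set.Icc a b, ∃ j ∈ Set.Icc a' b', (wdist Γ (γ i) (γ' j) : ℝ) ≤ M) ∧
      (∀ j ∈ Set.Icc a' b', ∃ i ∈ Set.Icc a b, (wdist Γ (γ i) (γ' j) : ℝ) ≤ M)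

/-- `H` is `N`-join-busting: every join subword of a reduced word representing an
element of `H` has length at most `N`. -/
def JoinBusting {V : Type*} (Γ : SimpleGraph V) (H : Subgroup (RACG Γ)) (N : ℕ) : Prop :=
  ∀ h ∈ H, ∀ w : List V, (w.map (gen Γ)).prod = h → w.length = len Γ h →
    ∀ β : List V, β <:+: w → InJoinSubgroup Γ (β.map (gen Γ)).prod → β.length ≤ N

/-- `a b c d` is an induced four-cycle (in this cyclic order), with diagonals
`(a, c)` and `(b, d)`. -/
def IsInducedFourCycle {V : Type*} (Γ : SimpleGraph V) (a b c d : V) : Prop :=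
  a ≠ c ∧ b ≠ d ∧ ¬ Γ.Adj a c ∧ ¬ Γ.Adj b d ∧
    Γ.Adj a b ∧ Γ.Adj b c ∧ Γ.Adj c d ∧ Γ.Adj d a

/-- A set of vertices is the vertex set of an induced four-cycle. -/
def IsFourCycleSet {V : Type*} (Γ : SimpleGraph V) (Q : Set V) : Prop :=
  ∃ a b c d : V, Q = {a, b, c, d} ∧ IsInducedFourCycle Γ a b c d

/-- The four-cycle graph `Γ⁴`: vertices are induced four-cycles of `Γ`, adjacent
when they share a pair of non-adjacent vertices. -/
def fourCycleGraph {V : Type*} (Γ : SimpleGraph V) :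
    SimpleGraph {Q : Set V // IsFourCycleSet Γ Q} :=
  SimpleGraph.fromRel (fun Q Q' => ∃ u v : V, u ≠ v ∧ ¬ Γ.Adj u v ∧
    u ∈ (Q : Set V) ∩ (Q' : Set V) ∧ v ∈ (Q : Set V) ∩ (Q' : Set V))

/-- A connected component of `Γ⁴` whose support is the whole vertex set of `Γ`. -/
def FullSupportComponent {V : Type*} (Γ : SimpleGraph V)
    (C : (fourCycleGraph Γ).ConnectedComponent) : Prop :=
  ∀ v : V, ∃ Q : {Q : Set V // IsFourCycleSet Γ Q},
    (fourCycleGraph Γ).connectedComponentMk Q = C ∧ v ∈ (Q : Set V)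

/-- `Γ` is CFS: some component of `Γ⁴` has full support. -/
def CFS {V : Type*} (Γ : SimpleGraph V) : Prop :=
  ∃ C : (fourCycleGraph Γ).ConnectedComponent, FullSupportComponent Γ C

/-- Length (number of edges) of a shortest edge path from `x` to `y` in the Cayley
graph all of whose vertices are at distance at least `c` from `H`. -/
noncomputable def avoidDist {V : Type*} (Γ : SimpleGraph V) (H : Subgroup (RACG Γ))
    (c : ℝ) (x y : RACG Γ) : ℝ≥0∞ :=
  ⨅ (l : List (RACG Γ)) (_ : l.head? = some x) (_ : l.getLast? = some y)
    (_ : l.Chain' fun a b => wdist Γ a b = 1)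
    (_ : ∀ z ∈ l, c ≤ (distH Γ H z : ℝ)), ((l.length - 1 : ℕ) : ℝ≥0∞)

/-- The subgroup divergence functions `σⁿ_ρ` of `H` in `RACG Γ`. -/
noncomputable def divFun {V : Type*} (Γ : SimpleGraph V) (H : Subgroup (RACG Γ))
    (ρ : ℝ) (n : ℕ) (r : ℝ) : ℝ≥0∞ :=
  ⨅ (x : RACG Γ) (y : RACG Γ) (_ : (distH Γ H x : ℝ) = r)
    (_ : (distH Γ H y : ℝ) = r) (_ : avoidDist Γ H r x y ≠ ⊤)
    (_ : (n : ℝ) * r ≤ (wdist Γ x y : ℝ)), avoidDist Γ H (ρ * r) x y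

/-- Domination of functions: `f(x) ≤ A g(Bx) + Cx` for large `x`. -/
def FunDom (f g : ℝ → ℝ≥0∞) : Prop :=
  ∃ A B C D : ℝ, 0 < A ∧ 0 < B ∧ 0 < C ∧ 0 < D ∧
    ∀ x : ℝ, D < x → f x ≤ ENNReal.ofReal A * g (B * x) + ENNReal.ofReal (C * x)

/-- Domination of families of divergence functions. -/
def FamDom (δ δ' : ℝ → ℕ → ℝ → ℝ≥0∞) : Prop :=
  ∃ L : ℝ, L ∈ Set.Ioc (0 : ℝ) 1 ∧ ∃ M : ℕ, 0 < M ∧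
    ∀ ρ ∈ Set.Ioc (0 : ℝ) 1, ∀ n : ℕ, 2 ≤ n → FunDom (δ (L * ρ) n) (δ' ρ (M * n))

/-- A family of divergence functions is equivalent to a single function. -/
def FamEquivFun (δ : ℝ → ℕ → ℝ → ℝ≥0∞) (f : ℝ → ℝ≥0∞) : Prop :=
  FamDom δ (fun _ _ => f) ∧ FamDom (fun _ _ => f) δ

/-- Height at most `n`: any `n+1` pairwise distinct cosets give conjugates with
finite total intersection. -/
def HeightAtMost {G : Type*} [Group G] (H : Subgroup G) (n : ℕ) : Prop :=
  ∀ f : Fin (n + 1) → G, (∀ i j, i ≠ j → (f i)⁻¹ * f j ∉ H) →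
    {x : G | ∀ i, (f i)⁻¹ * x * f i ∈ H}.Finite

/-- `H` has finite height in `G`. -/
def FiniteHeight {G : Type*} [Group G] (H : Subgroup G) : Prop :=
  ∃ n : ℕ, HeightAtMost H n

end RACGPaper

/-!
If no two vertices of `S₁` are at distance two, then on `S₁` the relation "equal or adjacent"
is an equivalence relation whose classes are cliques with no edges between them, so `G_{S₁}` is
the free product of the finite groups `G_C` over the classes `C`. Embedding every `G_C` in one
finite group `W`, `G_{S₁}` embeds in a free product of copies of `W`, in which the kernel of the
fold map to `W` is free (ping-pong on reduced words) and of finite index.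

A join or a star has diameter at most two, so it meets such an `S₁` in a clique. Retracting `G_Γ`
onto `G_{S₁}` moves any conjugate of `h ∈ G_{S₁}` lying in `G_T` into the finite group
`G_{T ∩ S₁}`, so `h` has finite order. Conversely, two vertices `u, v ∈ S₁` at distance two have a
common neighbour `w`, and the infinite-order element `uv` lies both in the join subgroup of
`{w} ∪ {u, v}` and in the star subgroup of `w`; if instead `S₁` is a clique, `G_{S₁}` is finite.
-/

theorem SimpleGraph.dist_eq_two_iff {V : Type*} {Γ : SimpleGraph V} {u v : V} :
    Γ.dist u v = 2 ↔ u ≠ v ∧ ¬Γ.Adj u v ∧ (Γ.commonNeighbors u v).Nonempty := by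
  rw [← SimpleGraph.edist_eq_two_iff, SimpleGraph.dist, ENat.toNat_eq_iff two_ne_zero]
  rfl

namespace Monoid.CoprodI.Word

variable {ι : Type*} {M : ι → Type*} [∀ i, Monoid (M i)] [DecidableEq ι] [∀ i, DecidableEq (M i)]

theorem equivPair_head_eq_one {i : ι} {w : Word M} (hw : w.fstIdx ≠ some i) :
    (equivPair i w).head = 1 := by
  rw [equivPair_eq_of_fstIdx_ne hw]

theorem fstIdx_eq_of_equivPair_head_ne_one {i : ι} {w : Word M}
    (hw : (equivPair i w).head ≠ 1) : w.fstIdx = some i :=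
  not_not.1 (mt equivPair_head_eq_one hw)

theorem equivPair_head_of_smul {i : ι} (m : M i) {w : Word M} (hw : w.fstIdx ≠ some i) :
    (equivPair i (of m • w)).head = m := by
  rw [equivPair_smul_same, equivPair_head_eq_one hw, mul_one]

end Monoid.CoprodI.Word

namespace RACGPaper

theorem isOfFinOrder_conj_iff {G : Type*} [Group G] (k x : G) :
    IsOfFinOrder (k * x * k⁻¹) ↔ IsOfFinOrder x := by
  rw [← orderOf_pos_iff, ← orderOf_pos_iff,
    SemiconjBy.orderOf_eq k (inv_mul_cancel_right (k * x) k).symm]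

section VirtuallyFree

variable {G : Type*} [Group G]

theorem VirtuallyFree.of_finite [Finite G] : VirtuallyFree G :=
  ⟨⊥, inferInstance, IsFreeGroup.ofMulEquiv (MulEquiv.ofUnique (M := FreeGroup Empty))⟩

theorem VirtuallyFree.of_injective {H : Type*} [Group H] {f : G →* H}
    (hf : Function.Injective f) (hH : VirtuallyFree H) : VirtuallyFree G := by
  obtain ⟨F, hF, hfree⟩ := hH
  refine ⟨F.comap f, ⟨?_⟩, ?_⟩
  · rw [Subgroup.index_comap]
    exact Subgroup.isFiniteRelIndex_of_finiteIndex.relIndex_ne_zero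
  · let φ : F.comap f →* F := (f.comp (F.comap f).subtype).codRestrict F fun x => x.2
    have hφ : Function.Injective φ := fun a b hab =>
      Subtype.ext (hf (congrArg Subtype.val hab))
    -- Nielsen–Schreier: the range of `φ` is a subgroup of the free group `F`.
    exact IsFreeGroup.ofMulEquiv (MonoidHom.ofInjective hφ).symm

theorem virtuallyFree_conjSubgroup {K : Subgroup G} (g : G) (hK : VirtuallyFree K) :
    VirtuallyFree (conjSubgroup g K) :=
  hK.of_injective (f := (K.equivMapOfInjective _ (MulAut.conj g).injective).symm.toMonoidHom)
    (MulEquiv.injective _)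

end VirtuallyFree

section FreeProduct

open Monoid CoprodI Word

variable {ι W : Type*} [Group W]

abbrev ofAt (i : ι) : W →* CoprodI fun _ : ι => W := of (M := fun _ : ι => W) (i := i)

def fold (ι W : Type*) [Group W] : CoprodI (fun _ : ι => W) →* W :=
  lift fun _ => MonoidHom.id W

@[simp] theorem fold_ofAt {i : ι} (x : W) : fold ι W (ofAt i x) = x := by
  simp [fold]

/-- The kernel of `fold` is free on the elements `foldKerGen i₀ j x` with `j ≠ i₀`, `x ≠ 1`. -/
def foldKerGen (i₀ j : ι) (x : W) : CoprodI fun _ : ι => W :=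
  ofAt j x * (ofAt i₀ x)⁻¹

def FoldKerIdx (ι : Type*) (i₀ : ι) (W : Type*) [One W] : Type _ :=
  {j : ι // j ≠ i₀} × {x : W // x ≠ 1}

def foldKerBasis (i₀ : ι) (p : FoldKerIdx ι i₀ W) : CoprodI fun _ : ι => W :=
  foldKerGen i₀ (p.1 : ι) (p.2 : W)

theorem conj_foldKerGen (i₀ : ι) (u : W) (j : ι) (x : W) :
    ofAt i₀ u * foldKerGen i₀ j x * (ofAt i₀ u)⁻¹ =
      (foldKerGen i₀ j u)⁻¹ * foldKerGen i₀ j (u * x) := by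
  simp only [foldKerGen, map_mul, mul_inv_rev, inv_inv]
  group

theorem foldKerGen_mem_closure (i₀ j : ι) (x : W) :
    foldKerGen i₀ j x ∈ Subgroup.closure (Set.range (foldKerBasis i₀)) := by
  by_cases hj : j = i₀
  · simp [foldKerGen, hj]
  by_cases hx : x = 1
  · simp [foldKerGen, hx]
  exact Subgroup.subset_closure ⟨(⟨j, hj⟩, ⟨x, hx⟩), rfl⟩

theorem ofAt_conj_mem_closure {i₀ : ι} (u : W) {c : CoprodI fun _ : ι => W}
    (hc : c ∈ Subgroup.closure (Set.range (foldKerBasis i₀))) :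
    ofAt i₀ u * c * (ofAt i₀ u)⁻¹ ∈ Subgroup.closure (Set.range (foldKerBasis i₀)) := by
  induction hc using Subgroup.closure_induction with
  | mem _ hy =>
    obtain ⟨p, rfl⟩ := hy
    rw [foldKerBasis, conj_foldKerGen]
    exact mul_mem (inv_mem (foldKerGen_mem_closure _ _ _)) (foldKerGen_mem_closure _ _ _)
  | one => simp
  | mul a b _ _ ha hb => simpa [mul_assoc] using mul_mem ha hb
  | inv a _ ha => simpa [mul_assoc] using inv_mem ha

theorem exists_mem_closure_mul_ofAt_fold (i₀ : ι) (g : CoprodI fun _ : ι => W) :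
    ∃ c ∈ Subgroup.closure (Set.range (foldKerBasis i₀)), g = c * ofAt i₀ (fold ι W g) := by
  induction g using CoprodI.induction_left with
  | one => exact ⟨1, one_mem _, by simp⟩
  | @mul i m x ih =>
    obtain ⟨c, hc, hx⟩ := ih
    refine ⟨foldKerGen i₀ i m * (ofAt i₀ m * c * (ofAt i₀ m)⁻¹),
      mul_mem (foldKerGen_mem_closure i₀ i m) (ofAt_conj_mem_closure m hc), ?_⟩
    rw [map_mul, show fold ι W (of m) = m from fold_ofAt (i := i) m, map_mul, foldKerGen]
    conv_lhs => rw [hx]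
    group

theorem closure_foldKerBasis_eq_ker (i₀ : ι) :
    Subgroup.closure (Set.range (foldKerBasis i₀)) = (fold ι W).ker := by
  refine le_antisymm (Subgroup.closure_le _ |>.2 ?_) fun g hg => ?_
  · rintro _ ⟨p, rfl⟩
    simp [foldKerBasis, foldKerGen]
  · obtain ⟨c, hc, hgc⟩ := exists_mem_closure_mul_ofAt_fold i₀ g
    rwa [hgc, MonoidHom.mem_ker.1 hg, map_one, mul_one]

variable [DecidableEq ι] [DecidableEq W]

/-- The reduced words beginning with the letter `x` of factor `j`; together with
`pongSet i₀ j x`, the ping-pong sets of `foldKerGen i₀ j x`. -/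
def pingSet (j : ι) (x : W) : Set (Word fun _ : ι => W) :=
  {w | (equivPair j w).head = x}

def pongSet (i₀ j : ι) (x : W) : Set (Word fun _ : ι => W) :=
  ofAt i₀ x • {w | w.fstIdx = some j}

variable {i₀ : ι}

theorem pingSet_nonempty (j : ι) (x : W) : (pingSet j x).Nonempty :=
  ⟨ofAt j x • empty, equivPair_head_of_smul (M := fun _ : ι => W) x (by simp [empty, fstIdx])⟩

theorem foldKerGen_smul_compl_pongSet_subset (j : ι) (x : W) :
    foldKerGen i₀ j x • (pongSet i₀ j x)ᶜ ⊆ pingSet j x := by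
  refine Set.smul_set_subset_iff.2 fun w hw => ?_
  rw [Set.mem_compl_iff, pongSet, Set.mem_smul_set_iff_inv_smul_mem, ← map_inv] at hw
  rw [foldKerGen, mul_smul, ← map_inv]
  exact equivPair_head_of_smul (M := fun _ : ι => W) x hw

theorem foldKerGen_inv_smul_compl_pingSet_subset (j : ι) (x : W) :
    (foldKerGen i₀ j x)⁻¹ • (pingSet j x)ᶜ ⊆ pongSet i₀ j x := by
  refine Set.smul_set_subset_iff.2 fun w hw => ?_
  rw [foldKerGen, mul_inv_rev, inv_inv, mul_smul]
  refine Set.smul_mem_smul_set (fstIdx_eq_of_equivPair_head_ne_one ?_)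
  rw [← map_inv, equivPair_smul_same]
  exact fun h => hw (inv_mul_eq_one.1 h).symm

theorem equivPair_head_of_mem_pongSet {j : ι} (hj : j ≠ i₀) {x : W}
    {w : Word fun _ : ι => W} (hw : w ∈ pongSet i₀ j x) : (equivPair i₀ w).head = x := by
  obtain ⟨w, hw, rfl⟩ := hw
  refine equivPair_head_of_smul (M := fun _ : ι => W) x ?_
  rw [show w.fstIdx = some j from hw]
  exact mt Option.some_inj.1 hj

theorem disjoint_pingSet {j j' : ι} {x x' : W} (hx : x ≠ 1) (hx' : x' ≠ 1)
    (h : (j, x) ≠ (j', x')) : Disjoint (pingSet j x) (pingSet j' x') := by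
  refine Set.disjoint_left.2 fun w hw hw' => h ?_
  have hjj' : j = j' := Option.some_inj.1 <|
    (fstIdx_eq_of_equivPair_head_ne_one (hw.symm ▸ hx :)).symm.trans
      (fstIdx_eq_of_equivPair_head_ne_one (hw'.symm ▸ hx' :))
  subst hjj'
  exact Prod.ext rfl (hw.symm.trans hw')

theorem disjoint_pingSet_pongSet {j j' : ι} (hj : j ≠ i₀) (hj' : j' ≠ i₀) {x x' : W}
    (hx : x ≠ 1) (hx' : x' ≠ 1) : Disjoint (pingSet j x) (pongSet i₀ j' x') := by
  refine Set.disjoint_left.2 fun w hw hw' => hj (Option.some_inj.1 ?_)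
  rw [← fstIdx_eq_of_equivPair_head_ne_one (hw.symm ▸ hx :)]
  exact fstIdx_eq_of_equivPair_head_ne_one ((equivPair_head_of_mem_pongSet hj' hw').symm ▸ hx' :)

theorem disjoint_pongSet {j j' : ι} (hj : j ≠ i₀) (hj' : j' ≠ i₀) {x x' : W}
    (h : (j, x) ≠ (j', x')) : Disjoint (pongSet i₀ j x) (pongSet i₀ j' x') := by
  refine Set.disjoint_left.2 fun w hw hw' => h ?_
  have hxx' : x = x' := (equivPair_head_of_mem_pongSet hj hw).symm.trans
    (equivPair_head_of_mem_pongSet hj' hw')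
  subst hxx'
  rw [pongSet, Set.mem_smul_set_iff_inv_smul_mem] at hw hw'
  exact Prod.ext (Option.some_inj.1 ((show _ = some j from hw).symm.trans hw')) rfl

theorem foldKerGen_pow_succ_smul_empty_mem {j : ι} (hj : j ≠ i₀) {x : W} (hx : x ≠ 1) (n : ℕ) :
    foldKerGen i₀ j x ^ (n + 1) • (empty : Word fun _ : ι => W) ∈ pingSet j x := by
  induction n with
  | zero =>
    rw [pow_one]
    refine foldKerGen_smul_compl_pongSet_subset j x (Set.smul_mem_smul_set fun h => hx ?_)
    rw [← equivPair_head_of_mem_pongSet hj h]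
    exact equivPair_head_eq_one (by simp [empty, fstIdx])
  | succ n ih =>
    rw [pow_succ', mul_smul]
    exact foldKerGen_smul_compl_pongSet_subset j x (Set.smul_mem_smul_set fun h =>
      (disjoint_pingSet_pongSet hj hj hx hx).ne_of_mem ih h rfl)

theorem not_isOfFinOrder_foldKerGen {j : ι} (hj : j ≠ i₀) {x : W} (hx : x ≠ 1) :
    ¬IsOfFinOrder (foldKerGen i₀ j x) := by
  rw [isOfFinOrder_iff_pow_eq_one]
  rintro ⟨n, hn, hpow⟩
  obtain ⟨m, rfl⟩ : ∃ m, n = m + 1 := ⟨n - 1, by omega⟩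
  have h := foldKerGen_pow_succ_smul_empty_mem hj hx m
  rw [hpow, one_smul] at h
  exact hx (h.symm.trans (equivPair_head_eq_one (by simp [empty, fstIdx])))

theorem injective_lift_foldKerBasis :
    Function.Injective (FreeGroup.lift (foldKerBasis (W := W) i₀)) := by
  rcases subsingleton_or_nontrivial (FoldKerIdx ι i₀ W) with hsub | hnt
  -- Mathlib's ping-pong lemma needs two generators; one generator is handled by its infinite order.
  · rcases isEmpty_or_nonempty (FoldKerIdx ι i₀ W) with hemp | hne
    · exact Function.injective_of_subsingleton _
    · obtain ⟨p⟩ := hne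
      have : Unique (FoldKerIdx ι i₀ W) := uniqueOfSubsingleton p
      refine (injective_iff_map_eq_one _).2 fun y hy => ?_
      obtain ⟨k, rfl⟩ : ∃ k : ℤ, FreeGroup.of p ^ k = y := by
        rw [← Unique.default_eq p]
        exact ⟨_, FreeGroup.equivIntOfUnique.symm_apply_apply y⟩
      rw [map_zpow, FreeGroup.lift_apply_of] at hy
      rw [injective_zpow_iff_not_isOfFinOrder.2 (not_isOfFinOrder_foldKerGen p.1.2 p.2.2)
        (hy.trans (zpow_zero _).symm), zpow_zero]
  · have hext {p q : FoldKerIdx ι i₀ W}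
        (h : ((p.1 : ι), (p.2 : W)) = ((q.1 : ι), (q.2 : W))) : p = q :=
      Prod.ext (Subtype.ext (congrArg Prod.fst h)) (Subtype.ext (congrArg Prod.snd h))
    refine FreeGroup.injective_lift_of_ping_pong _ (fun p => pingSet (p.1 : ι) (p.2 : W))
      (fun p => pongSet i₀ (p.1 : ι) (p.2 : W)) (fun p => pingSet_nonempty _ _) ?_ ?_ ?_
      (fun p => foldKerGen_smul_compl_pongSet_subset _ _)
      (fun p => foldKerGen_inv_smul_compl_pingSet_subset _ _)
    · exact fun p q hpq => disjoint_pingSet p.2.2 q.2.2 fun h => hpq (hext h)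
    · exact fun p q hpq => disjoint_pongSet p.1.2 q.1.2 fun h => hpq (hext h)
    · exact fun p q => disjoint_pingSet_pongSet p.1.2 q.1.2 p.2.2 q.2.2

end FreeProduct

theorem virtuallyFree_coprodI {ι W : Type*} [Group W] [Finite W] [Nonempty ι] :
    VirtuallyFree (Monoid.CoprodI fun _ : ι => W) := by
  classical
  obtain ⟨i₀⟩ := ‹Nonempty ι›
  refine ⟨(fold ι W).ker, Subgroup.finiteIndex_ker _, ?_⟩
  rw [← closure_foldKerBasis_eq_ker i₀, ← FreeGroup.range_lift_eq_closure]
  exact IsFreeGroup.ofMulEquiv (MonoidHom.ofInjective injective_lift_foldKerBasis)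

section RightAngledCoxeterGroup

variable {V : Type*} (Γ : SimpleGraph V)

theorem gen_mul_self (v : V) : gen Γ v * gen Γ v = 1 :=
  (map_mul _ _ _).symm.trans (PresentedGroup.one_of_mem (Or.inl ⟨v, rfl⟩))

theorem gen_commute {u v : V} (h : Γ.Adj u v) : Commute (gen Γ u) (gen Γ v) := by
  have hsq : (gen Γ u * gen Γ v) ^ 2 = 1 :=
    (map_pow _ _ _).symm.trans (PresentedGroup.one_of_mem (Or.inr ⟨u, v, h, rfl⟩))
  rwa [sq, mul_eq_one_iff_eq_inv, mul_inv_rev, inv_eq_of_mul_eq_one_right (gen_mul_self Γ u),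
    inv_eq_of_mul_eq_one_right (gen_mul_self Γ v)] at hsq

theorem isOfFinOrder_gen (v : V) : IsOfFinOrder (gen Γ v) :=
  isOfFinOrder_iff_pow_eq_one.2 ⟨2, two_pos, (sq _).trans (gen_mul_self Γ v)⟩

def RACG.lift {G : Type*} [Group G] (f : V → G) (hf : ∀ v, f v * f v = 1)
    (hadj : ∀ u v, Γ.Adj u v → Commute (f u) (f v)) : RACG Γ →* G :=
  PresentedGroup.toGroup (f := f) <| by
    rintro r (⟨v, rfl⟩ | ⟨u, v, huv, rfl⟩)
    · simpa using hf v
    · rw [map_pow, map_mul, FreeGroup.lift_apply_of, FreeGroup.lift_apply_of]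
      calc (f u * f v) ^ 2 = f u * (f v * f u) * f v := by rw [sq]; simp only [mul_assoc]
        _ = (f u * f u) * (f v * f v) := by rw [← (hadj u v huv).eq]; group
        _ = 1 := by rw [hf, hf, one_mul]

@[simp] theorem RACG.lift_gen {G : Type*} [Group G] (f : V → G) (hf) (hadj) (v : V) :
    RACG.lift Γ f hf hadj (gen Γ v) = f v :=
  PresentedGroup.toGroup.of _

theorem gen_mem_special {S : Set V} {v : V} (hv : v ∈ S) : gen Γ v ∈ special Γ S :=
  Subgroup.subset_closure ⟨v, hv, rfl⟩

theorem special_univ : special Γ Set.univ = ⊤ := by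
  rw [special, Set.image_univ]
  exact PresentedGroup.closure_range_of _

theorem finite_special_of_isClique {C : Set V} (hC : Γ.IsClique C) (hfin : C.Finite) :
    (special Γ C : Set (RACG Γ)).Finite := by
  have : Fintype C := hfin.fintype
  have hcomm : Pairwise fun u v : C => ∀ x y, x ∈ Subgroup.zpowers (gen Γ u) →
      y ∈ Subgroup.zpowers (gen Γ v) → Commute x y := by
    rintro u v huv _ _ ⟨m, rfl⟩ ⟨n, rfl⟩
    exact (gen_commute Γ (hC u.2 v.2 (Subtype.coe_ne_coe.2 huv))).zpow_zpow m n
  have : ∀ v : C, Finite (Subgroup.zpowers (gen Γ v)) := fun v =>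
    (isOfFinOrder_gen Γ v).finite_zpowers.to_subtype
  refine (Set.finite_range (Subgroup.noncommPiCoprod hcomm)).subset ?_
  rw [← MonoidHom.coe_range, Subgroup.noncommPiCoprod_range, special,
    SetLike.coe_subset_coe, Subgroup.closure_le]
  rintro _ ⟨v, hv, rfl⟩
  exact Subgroup.mem_iSup_of_mem ⟨v, hv⟩ (Subgroup.mem_zpowers _)

/-- `u ↦ sr 0`, `v ↦ sr 1` maps `G_Γ` onto the infinite dihedral group, sending `u v` to the
rotation `r 1`. -/
theorem not_isOfFinOrder_gen_mul_gen {u v : V} (huv : u ≠ v) (h : ¬Γ.Adj u v) :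
    ¬IsOfFinOrder (gen Γ u * gen Γ v) := by
  classical
  let f : V → DihedralGroup 0 := fun w => if w = u then .sr 0 else if w = v then .sr 1 else 1
  have hf : ∀ w, f w * f w = 1 := fun w => by
    simp only [f]; split_ifs <;> simp
  have hadj : ∀ a b, Γ.Adj a b → Commute (f a) (f b) := fun a b hab => by
    simp only [f]
    split_ifs <;> subst_vars <;>
      first | exact (hab.ne rfl).elim | exact (h hab).elim | exact (h hab.symm).elim | simp
  intro hfin
  have := (RACG.lift Γ f hf hadj).isOfFinOrder hfin
  simp only [map_mul, RACG.lift_gen, f, if_pos, if_neg huv.symm] at this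
  simp only [DihedralGroup.sr_mul_sr] at this
  exact orderOf_eq_zero_iff.1 DihedralGroup.orderOf_r_one this

def retraction (S : Set V) [DecidablePred (· ∈ S)] : RACG Γ →* RACG Γ :=
  RACG.lift Γ (fun v => if v ∈ S then gen Γ v else 1)
    (fun v => by split_ifs <;> simp [gen_mul_self])
    (fun u v huv => by split_ifs <;> simp [gen_commute Γ huv])

theorem retraction_eq_self {S : Set V} [DecidablePred (· ∈ S)] {x : RACG Γ}
    (hx : x ∈ special Γ S) : retraction Γ S x = x := by
  have : special Γ S ≤ (retraction Γ S).eqLocus (MonoidHom.id _) := by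
    refine Subgroup.closure_le _ |>.2 ?_
    rintro _ ⟨v, hv, rfl⟩
    exact (by simp [retraction, hv] : retraction Γ S (gen Γ v) = gen Γ v)
  exact this hx

theorem retraction_mem_special_inter {S T : Set V} [DecidablePred (· ∈ S)] {x : RACG Γ}
    (hx : x ∈ special Γ T) : retraction Γ S x ∈ special Γ (T ∩ S) := by
  have : (special Γ T).map (retraction Γ S) ≤ special Γ (T ∩ S) := by
    rw [special, MonoidHom.map_closure, Subgroup.closure_le]
    rintro _ ⟨_, ⟨v, hv, rfl⟩, rfl⟩
    by_cases hvS : v ∈ S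
    · simpa [retraction, hvS] using gen_mem_special Γ (show v ∈ T ∩ S from ⟨hv, hvS⟩)
    · simp [retraction, hvS]
  exact this ⟨x, hx, rfl⟩

/-- The retraction onto `G_S` moves `k x k⁻¹ ∈ G_T` into the finite group `G_{T ∩ S}`. -/
theorem conj_not_mem_special_of_isClique_inter {S T : Set V} (hTS : Γ.IsClique (T ∩ S))
    (hfin : (T ∩ S).Finite) {x : RACG Γ} (hx : x ∈ special Γ S) (hord : ¬IsOfFinOrder x)
    (k : RACG Γ) : k * x * k⁻¹ ∉ special Γ T := by
  classical
  intro hmem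
  have hr := retraction_mem_special_inter Γ (S := S) hmem
  rw [map_mul, map_mul, map_inv, retraction_eq_self Γ hx] at hr
  have hfinord := finite_zpowers.1 ((finite_special_of_isClique Γ hTS hfin).subset
    (Subgroup.zpowers_le.2 hr))
  exact hord ((isOfFinOrder_conj_iff _ _).1 hfinord)

end RightAngledCoxeterGroup

section ClusterGraph

open Monoid

variable {V : Type*} (Γ : SimpleGraph V)

def InducesClusterGraph (S : Set V) : Prop :=
  ∀ u ∈ S, ∀ v ∈ S, ∀ w ∈ S, Γ.Adj u v → Γ.Adj v w → u ≠ w → Γ.Adj u w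

variable {S : Set V}

theorem InducesClusterGraph.of_pairwise_dist_ne_two
    (hS : S.Pairwise fun u v => Γ.dist u v ≠ 2) : InducesClusterGraph Γ S :=
  fun _ hu v _ _ hw huv hvw huw => by_contra fun hn =>
    hS hu hw huw (SimpleGraph.dist_eq_two_iff.2 ⟨huw, hn, v, huv, hvw.symm⟩)

def cliqueSetoid (hS : InducesClusterGraph Γ S) : Setoid S where
  r a b := a = b ∨ Γ.Adj a b
  iseqv.refl _ := Or.inl rfl
  iseqv.symm h := h.imp Eq.symm Γ.adj_symm
  iseqv.trans := by
    rintro a b c (rfl | hab) (rfl | hbc)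
    · exact Or.inl rfl
    · exact Or.inr hbc
    · exact Or.inr hab
    · by_cases hac : a = c
      · exact Or.inl hac
      · exact Or.inr (hS a a.2 b b.2 c c.2 hab hbc (Subtype.coe_ne_coe.2 hac))

/- The clique subgroups `G_C` of `G_S` all embed in the one finite group `RACG ⊤` on `S`, so
that `G_S` embeds in a free product of copies of a single group. -/
open Classical in
noncomputable def toCliqueCoprod (hS : InducesClusterGraph Γ S) :
    RACG Γ →* CoprodI fun _ : Quotient (cliqueSetoid Γ hS) => RACG (⊤ : SimpleGraph S) :=
  RACG.lift Γ (fun v => if h : v ∈ S then ofAt ⟦⟨v, h⟩⟧ (gen ⊤ ⟨v, h⟩) else 1)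
    (fun v => by split_ifs <;> simp [← map_mul, gen_mul_self])
    (fun u v huv => by
      split_ifs with hu hv hv
      · rw [Quotient.sound (Or.inr huv : cliqueSetoid Γ hS ⟨u, hu⟩ ⟨v, hv⟩)]
        exact (gen_commute _ (show (⊤ : SimpleGraph S).Adj ⟨u, hu⟩ ⟨v, hv⟩ from
          fun h => huv.ne (congrArg Subtype.val h))).map _
      all_goals simp)

open Classical in
noncomputable def ofCliqueCoprod (hS : InducesClusterGraph Γ S) :
    (CoprodI fun _ : Quotient (cliqueSetoid Γ hS) => RACG (⊤ : SimpleGraph S)) →* RACG Γ :=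
  CoprodI.lift fun c => RACG.lift ⊤ (fun s => if ⟦s⟧ = c then gen Γ s else 1)
    (fun s => by split_ifs <;> simp [gen_mul_self])
    (fun s t hst => by
      split_ifs with hs ht ht
      · exact gen_commute Γ ((Quotient.exact (hs.trans ht.symm)).resolve_left hst)
      all_goals simp)

theorem ofCliqueCoprod_toCliqueCoprod (hS : InducesClusterGraph Γ S) {x : RACG Γ}
    (hx : x ∈ special Γ S) : ofCliqueCoprod Γ hS (toCliqueCoprod Γ hS x) = x := by
  have : special Γ S ≤
      ((ofCliqueCoprod Γ hS).comp (toCliqueCoprod Γ hS)).eqLocus (MonoidHom.id _) := by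
    refine Subgroup.closure_le _ |>.2 ?_
    rintro _ ⟨v, hv, rfl⟩
    show ofCliqueCoprod Γ hS (toCliqueCoprod Γ hS (gen Γ v)) = gen Γ v
    simp [toCliqueCoprod, ofCliqueCoprod, hv]
  exact this hx

theorem virtuallyFree_special (hS : InducesClusterGraph Γ S) (hfin : S.Finite) :
    VirtuallyFree (special Γ S) := by
  rcases S.eq_empty_or_nonempty with rfl | ⟨v, hv⟩
  · have := (finite_special_of_isClique Γ Γ.isClique_empty hfin).to_subtype
    exact VirtuallyFree.of_finite
  have : Finite S := hfin.to_subtype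
  have : Nonempty (Quotient (cliqueSetoid Γ hS)) := ⟨⟦⟨v, hv⟩⟧⟩
  have : Finite (RACG (⊤ : SimpleGraph S)) := by
    have h := finite_special_of_isClique (⊤ : SimpleGraph S) (C := Set.univ)
      (fun _ _ _ _ h => h) Set.finite_univ
    rw [special_univ, Subgroup.coe_top] at h
    exact Set.finite_univ_iff.1 h
  refine virtuallyFree_coprodI.of_injective
    (f := (toCliqueCoprod Γ hS).comp (special Γ S).subtype) fun a b hab => ?_
  rw [← Subtype.coe_inj, ← ofCliqueCoprod_toCliqueCoprod Γ hS a.2,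
    ← ofCliqueCoprod_toCliqueCoprod Γ hS b.2]
  exact congrArg _ hab

end ClusterGraph

open SimpleGraph

section Graph

variable {V : Type*} (Γ : SimpleGraph V)

variable {Γ} in
theorem IsJoin.pairwise_adj_or_dist_eq_two {J : Set V} (hJ : IsJoin Γ J) :
    J.Pairwise fun u v => Γ.Adj u v ∨ Γ.dist u v = 2 := by
  obtain ⟨V₁, V₂, ⟨a, ha⟩, ⟨b, hb⟩, -, rfl, hadj⟩ := hJ
  intro u hu v hv huv
  refine or_iff_not_imp_left.2 fun hn => dist_eq_two_iff.2 ⟨huv, hn, ?_⟩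
  rcases hu with hu | hu <;> rcases hv with hv | hv
  · exact ⟨b, hadj u hu b hb, hadj v hv b hb⟩
  · exact (hn (hadj u hu v hv)).elim
  · exact (hn (hadj v hv u hu).symm).elim
  · exact ⟨a, (hadj a ha u hu).symm, (hadj a ha v hv).symm⟩

theorem exists_isJoin_of_dist_eq_two {u v : V} (h : Γ.dist u v = 2) :
    ∃ J, IsJoin Γ J ∧ u ∈ J ∧ v ∈ J := by
  obtain ⟨-, -, w, huw, hvw⟩ := dist_eq_two_iff.1 h
  refine ⟨{w} ∪ {u, v}, ⟨{w}, {u, v}, Set.singleton_nonempty w, Set.insert_nonempty u {v},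
    ?_, rfl, ?_⟩, by simp, by simp⟩
  · rw [Set.disjoint_singleton_left]
    rintro (rfl | rfl)
    exacts [huw.ne rfl, hvw.ne rfl]
  · rintro _ rfl _ (rfl | rfl)
    exacts [huw.symm, hvw.symm]

theorem starSet_pairwise_adj_or_dist_eq_two (w : V) :
    (starSet Γ w).Pairwise fun u v => Γ.Adj u v ∨ Γ.dist u v = 2 := by
  rintro u (rfl | hu) v (rfl | hv) huv
  · exact (huv rfl).elim
  · exact Or.inl hv
  · exact Or.inl hu.symm
  · exact or_iff_not_imp_left.2 fun hn => dist_eq_two_iff.2 ⟨huv, hn, w, hu.symm, hv.symm⟩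

theorem exists_starSet_of_dist_eq_two {u v : V} (h : Γ.dist u v = 2) :
    ∃ T ∈ Set.range (starSet Γ), u ∈ T ∧ v ∈ T := by
  obtain ⟨-, -, w, huw, hvw⟩ := dist_eq_two_iff.1 h
  exact ⟨_, ⟨w, rfl⟩, Or.inr huw.symm, Or.inr hvw.symm⟩

end Graph

section FamilyFree

variable {V : Type*} (Γ : SimpleGraph V)

def FamilyFree (𝒯 : Set (Set V)) (H : Subgroup (RACG Γ)) : Prop :=
  (H : Set (RACG Γ)).Infinite ∧
    ∀ h ∈ H, ¬IsOfFinOrder h → ∀ g : RACG Γ, ∀ T ∈ 𝒯, g * h * g⁻¹ ∉ special Γ T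

variable {Γ}

theorem joinFree_iff_familyFree {H : Subgroup (RACG Γ)} :
    JoinFree Γ H ↔ FamilyFree Γ {J | IsJoin Γ J} H := by
  simp [JoinFree, FamilyFree, InJoinSubgroup]

theorem starFree_iff_familyFree {H : Subgroup (RACG Γ)} :
    StarFree Γ H ↔ FamilyFree Γ (Set.range (starSet Γ)) H := by
  simp [StarFree, FamilyFree, InStarSubgroup]

theorem familyFree_conjSubgroup_iff {𝒯 : Set (Set V)} (g : RACG Γ) (K : Subgroup (RACG Γ)) :
    FamilyFree Γ 𝒯 (conjSubgroup g K) ↔ FamilyFree Γ 𝒯 K := by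
  refine and_congr ?_ ⟨fun h x hx hord k T hT hmem => ?_, fun h y hy hord k T hT hmem => ?_⟩
  · rw [conjSubgroup, Subgroup.coe_map]
    exact Set.infinite_image_iff (MulAut.conj g).injective.injOn
  · refine h (g * x * g⁻¹) ⟨x, hx, rfl⟩ (by rwa [isOfFinOrder_conj_iff]) (k * g⁻¹) T hT ?_
    simpa [mul_assoc] using hmem
  · obtain ⟨x, hx, rfl⟩ := hy
    rw [MulEquiv.coe_toMonoidHom, MulAut.conj_apply, isOfFinOrder_conj_iff] at hord
    refine h x hx hord (k * g) T hT ?_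
    simpa [mul_assoc] using hmem

theorem familyFree_special_iff {𝒯 : Set (Set V)} {S : Set V} (hfin : S.Finite)
    (h𝒯 : ∀ T ∈ 𝒯, T.Pairwise fun u v => Γ.Adj u v ∨ Γ.dist u v = 2)
    (hdist : ∀ u v, Γ.dist u v = 2 → ∃ T ∈ 𝒯, u ∈ T ∧ v ∈ T) :
    FamilyFree Γ 𝒯 (special Γ S) ↔ ¬Γ.IsClique S ∧ S.Pairwise fun u v => Γ.dist u v ≠ 2 := by
  constructor
  · rintro ⟨hinf, hfree⟩
    refine ⟨fun hS => hinf (finite_special_of_isClique Γ hS hfin), fun u hu v hv huv h2 => ?_⟩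
    obtain ⟨T, hT, huT, hvT⟩ := hdist u v h2
    refine hfree _ (mul_mem (gen_mem_special Γ hu) (gen_mem_special Γ hv))
      (not_isOfFinOrder_gen_mul_gen Γ huv (dist_eq_two_iff.1 h2).2.1) 1 T hT ?_
    simpa using mul_mem (gen_mem_special Γ huT) (gen_mem_special Γ hvT)
  · rintro ⟨hnc, hS⟩
    obtain ⟨u, hu, v, hv, huv, hnadj⟩ : ∃ u ∈ S, ∃ v ∈ S, u ≠ v ∧ ¬Γ.Adj u v := by
      simpa [SimpleGraph.IsClique, Set.Pairwise] using hnc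
    refine ⟨(infinite_zpowers.2 (not_isOfFinOrder_gen_mul_gen Γ huv hnadj)).mono
      (Subgroup.zpowers_le.2 (mul_mem (gen_mem_special Γ hu) (gen_mem_special Γ hv))), ?_⟩
    intro x hx hord k T hT
    refine conj_not_mem_special_of_isClique_inter Γ (fun a ha b hb hab => ?_)
      (hfin.subset Set.inter_subset_right) hx hord k
    exact (h𝒯 T hT ha.1 hb.1 hab).resolve_right (hS ha.2 hb.2 hab)

end FamilyFree

end RACGPaper

open RACGPaper in
theorem parabolic_joinFree_starFree_iff_general
    {V : Type*} [Fintype V] (Γ : SimpleGraph V) (S₁ : Set V) (g : RACG Γ)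
    (H : Subgroup (RACG Γ)) (hH : H = conjSubgroup g (special Γ S₁)) :
    (((∃ u ∈ S₁, ∃ v ∈ S₁, u ≠ v ∧ ¬ Γ.Adj u v) ∧
        ∀ u ∈ S₁, ∀ v ∈ S₁, u ≠ v → Γ.dist u v ≠ 2) ↔ JoinFree Γ H) ∧
    (((∃ u ∈ S₁, ∃ v ∈ S₁, u ≠ v ∧ ¬ Γ.Adj u v) ∧
        ∀ u ∈ S₁, ∀ v ∈ S₁, u ≠ v → Γ.dist u v ≠ 2) ↔ StarFree Γ H) ∧
    (((∃ u ∈ S₁, ∃ v ∈ S₁, u ≠ v ∧ ¬ Γ.Adj u v) ∧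
        ∀ u ∈ S₁, ∀ v ∈ S₁, u ≠ v → Γ.dist u v ≠ 2) → VirtuallyFree ↥H) := by
  have hcond : ((∃ u ∈ S₁, ∃ v ∈ S₁, u ≠ v ∧ ¬ Γ.Adj u v) ∧
      ∀ u ∈ S₁, ∀ v ∈ S₁, u ≠ v → Γ.dist u v ≠ 2) ↔
      ¬Γ.IsClique S₁ ∧ S₁.Pairwise fun u v => Γ.dist u v ≠ 2 := by
    simp [SimpleGraph.IsClique, Set.Pairwise]
  have hjoin := familyFree_special_iff (𝒯 := {J | IsJoin Γ J}) S₁.toFinite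
    (fun _ hJ => hJ.pairwise_adj_or_dist_eq_two) (fun _ _ => exists_isJoin_of_dist_eq_two Γ)
  have hstar := familyFree_special_iff (𝒯 := Set.range (starSet Γ)) S₁.toFinite
    (Set.forall_mem_range.2 (starSet_pairwise_adj_or_dist_eq_two Γ))
    (fun _ _ => exists_starSet_of_dist_eq_two Γ)
  subst hH
  rw [hcond, joinFree_iff_familyFree, starFree_iff_familyFree, familyFree_conjSubgroup_iff,
    familyFree_conjSubgroup_iff, hjoin, hstar]
  exact ⟨Iff.rfl, Iff.rfl, fun ⟨_, hS⟩ => virtuallyFree_conjSubgroup g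
    (virtuallyFree_special Γ (.of_pairwise_dist_ne_two Γ hS) S₁.toFinite)⟩

open RACGPaper in
/-- for a conjugate of a special subgroup of a RACG with connected
non-join defining graph, condition (1) on `S₁`, join-freeness, and star-freeness are
equivalent, and such a subgroup is virtually free. -/
theorem parabolic_joinFree_starFree_iff
    {V : Type*} [Fintype V] (Γ : SimpleGraph V) (hconn : Γ.Connected)
    (hnj : ¬ IsJoin Γ (Set.univ : Set V)) (S₁ : Set V) (g : RACG Γ)
    (H : Subgroup (RACG Γ)) (hH : H = conjSubgroup g (special Γ S₁)) :
    (((∃ u ∈ S₁, ∃ v ∈ S₁, u ≠ v ∧ ¬ Γ.Adj u v) ∧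
        ∀ u ∈ S₁, ∀ v ∈ S₁, u ≠ v → Γ.dist u v ≠ 2) ↔ JoinFree Γ H) ∧
    (((∃ u ∈ S₁, ∃ v ∈ S₁, u ≠ v ∧ ¬ Γ.Adj u v) ∧
        ∀ u ∈ S₁, ∀ v ∈ S₁, u ≠ v → Γ.dist u v ≠ 2) ↔ StarFree Γ H) ∧
    (((∃ u ∈ S₁, ∃ v ∈ S₁, u ≠ v ∧ ¬ Γ.Adj u v) ∧
        ∀ u ∈ S₁, ∀ v ∈ S₁, u ≠ v → Γ.dist u v ≠ 2) → VirtuallyFree ↥H) :=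
  parabolic_joinFree_starFree_iff_general Γ S₁ g H hH
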